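/- Let n ≥ 2 and let S = T_n or S = Sing(T_n) (viewed inside P_n^fd). Then for all u,v ∈ E_n, θ_{uv} = θ_u ∨ θ_v, where the join is as left congruences on S¹ (equivalently, as equivalence relations on S¹). -/
import Mathlib


open scoped Classical

namespace PaperFDP

/-- Vertex set of a partition diagram: `inl x` is the upper vertex `x`,
`inr x` is the lower vertex `x'`. -/
abbrev V (n : ℕ) := Fin n ⊕ Fin n

/-- A partition in `P_n`: a set partition of the `2n` points, encoded as an
equivalence relation (a `Setoid`). -/
abbrev Ptn (n : ℕ) := Setoid (V n)

/-- Three-row vertex set (upper ⊕ (middle ⊕ lower)) used for the product graph. -/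
abbrev W3 (n : ℕ) := Fin n ⊕ (Fin n ⊕ Fin n)

/-- Embedding of `a`'s vertices: upper row stays, lower row goes to the middle row. -/
def upMid {n : ℕ} : V n → W3 n :=
  Sum.elim Sum.inl fun x => Sum.inr (Sum.inl x)

/-- Embedding of `b`'s vertices: upper row goes to the middle row, lower row stays. -/
def midLow {n : ℕ} : V n → W3 n :=
  Sum.elim (fun x => Sum.inr (Sum.inl x)) fun x => Sum.inr (Sum.inr x)

/-- Embedding of the outer (upper and lower) rows into the three-row vertex set. -/
def outer {n : ℕ} : V n → W3 n :=
  Sum.elim Sum.inl fun x => Sum.inr (Sum.inr x)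

/-- The edge relation of the product graph `Π(a,b)`. -/
def joinRel {n : ℕ} (a b : Ptn n) (u v : W3 n) : Prop :=
  (∃ p q : V n, a.r p q ∧ upMid p = u ∧ upMid q = v) ∨
  (∃ p q : V n, b.r p q ∧ midLow p = u ∧ midLow q = v)

/-- The product of two partitions: `x,y` lie in the same block of `a*b` iff they are
connected in the product graph. -/
def pmul {n : ℕ} (a b : Ptn n) : Ptn n :=
  Setoid.comap outer (Relation.EqvGen.setoid (joinRel a b))

/-- The identity partition, with blocks `{x, x'}`. -/
def onePtn (n : ℕ) : Ptn n := Setoid.ker (Sum.elim id id)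

/-- The partition of a transformation `f` (written on the right): `x` is joined to `(x f)'`. -/
def toPtn {n : ℕ} (f : Fin n → Fin n) : Ptn n := Setoid.ker (Sum.elim f id)

/-- `id_ε`, the partition with blocks `A ∪ A'` for the `ε`-classes `A`. -/
def idOf {n : ℕ} (ε : Setoid (Fin n)) : Ptn n := Setoid.comap (Sum.elim id id) ε

/-- The kernel of a partition. -/
def kerP {n : ℕ} (a : Ptn n) : Setoid (Fin n) := Setoid.comap Sum.inl a

/-- The cokernel of a partition. -/
def cokerP {n : ℕ} (a : Ptn n) : Setoid (Fin n) := Setoid.comap Sum.inr a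

/-- `a` has full domain: every upper point is in a block meeting the lower row. -/
def FullDom {n : ℕ} (a : Ptn n) : Prop :=
  ∀ x : Fin n, ∃ y : Fin n, a.r (Sum.inl x) (Sum.inr y)

/-- The full-domain partition monoid `P_n^fd` as a subset of `P_n`. -/
def Pfd (n : ℕ) : Set (Ptn n) := {a | FullDom a}

/-- `a` is (the partition of) a permutation, i.e. a unit of `P_n`. -/
def IsPermPtn {n : ℕ} (a : Ptn n) : Prop := ∃ g : Equiv.Perm (Fin n), a = toPtn ⇑g

/-- The singular ideal `Sing(P_n^fd) = P_n^fd ∖ S_n`. -/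
def SingPfd (n : ℕ) : Set (Ptn n) := {a | FullDom a ∧ ¬ IsPermPtn a}

/-- The boundary linear order on the `2n` vertices: `1 < … < n < n' < … < 1'`. -/
def ordV {n : ℕ} : V n → ℕ :=
  Sum.elim (fun x => (x : ℕ)) fun x => 2 * n - 1 - (x : ℕ)

/-- `a` is planar: it can be drawn without crossings, equivalently it is
non-crossing with respect to the boundary order on the `2n` vertices. -/
def Planar {n : ℕ} (a : Ptn n) : Prop :=
  ∀ p q r s : V n, ordV p < ordV q → ordV q < ordV r → ordV r < ordV s →
    a.r p r → a.r q s → a.r p q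

/-- The planar full-domain partition monoid `PP_n^fd` as a subset of `P_n`. -/
def PPfd (n : ℕ) : Set (Ptn n) := {a | FullDom a ∧ Planar a}

/-- `η_ij`: the equivalence on `{1,…,n}` whose only nontrivial class is `{i,j}`. -/
def etaOf {n : ℕ} (i j : Fin n) : Setoid (Fin n) :=
  Setoid.ker fun x => if x = j then i else x

/-- `ē_ij = id_{η_ij}`: the partition with block `{i,j,i',j'}` and blocks `{x,x'}` otherwise. -/
def ebar {n : ℕ} (i j : Fin n) : Ptn n := idOf (etaOf i j)

/-- `t̄_ij`: the transformation sending `j ↦ i` and fixing everything else, as a partition. -/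
def tbar {n : ℕ} (i j : Fin n) : Ptn n := toPtn fun x => if x = j then i else x

/-- Evaluation of a word as a genuine (semi)group product of partitions
(the empty word evaluates to the identity partition). -/
def evalWith {A : Type*} {n : ℕ} (g : A → Ptn n) : List A → Ptn n
  | [] => onePtn n
  | [x] => g x
  | x :: y :: w => pmul (g x) (evalWith g (y :: w))

/-- One-step rewriting using a relation from `R`, in an arbitrary context. -/
def OneStep {A : Type*} (R : List A → List A → Prop) (w w' : List A) : Prop :=
  ∃ u v p q : List A, R p q ∧ w = u ++ p ++ v ∧ w' = u ++ q ++ v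

/-- The congruence on the free monoid (or free semigroup) generated by `R`. -/
def PresCong {A : Type*} (R : List A → List A → Prop) : List A → List A → Prop :=
  Relation.EqvGen (OneStep R)

end PaperFDP

namespace PaperFDP

/-- The full transformation monoid `T_n` (`= T_n¹`), embedded in `P_n^fd`. -/
def TSet (n : ℕ) : Set (Ptn n) := {a | ∃ f : Fin n → Fin n, a = toPtn f}

/-- `Sing(T_n)¹ = Sing(T_n) ∪ {1}`, embedded in `P_n^fd`. -/
def SingT1 (n : ℕ) : Set (Ptn n) :=
  {a | ∃ f : Fin n → Fin n, a = toPtn f ∧ ¬ Function.Bijective f} ∪ {onePtn n}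

/-- The union `θ_u ∪ θ_v` of the two left congruences on `T`, where `u = id_ε`,
`v = id_η`. -/
def thUnion {n : ℕ} (T : Set (Ptn n)) (ε η : Setoid (Fin n)) (c d : Ptn n) : Prop :=
  c ∈ T ∧ d ∈ T ∧
    (pmul c (idOf ε) = pmul d (idOf ε) ∨ pmul c (idOf η) = pmul d (idOf η))


/-! ### Auxiliary development for stmt13 -/

section Aux

variable {n : ℕ}

lemma toPtn_injective : Function.Injective (toPtn (n := n)) := by
  intro f g h
  funext x
  have : (toPtn f).r (Sum.inl x) (Sum.inr (f x)) := rfl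
  rw [h] at this
  exact (this : g x = f x).symm

lemma onePtn_eq : onePtn n = toPtn (id : Fin n → Fin n) := rfl

/-- `val` for the product of `toPtn f` with `idOf ε`. -/
private def valA (f : Fin n → Fin n) : W3 n → Fin n :=
  Sum.elim f (Sum.elim id id)

lemma pmul_toPtn_idOf (f : Fin n → Fin n) (ε : Setoid (Fin n)) :
    pmul (toPtn f) (idOf ε) = Setoid.comap (Sum.elim f id) ε := by
  apply Setoid.ext
  intro p q
  constructor
  · intro h
    have key : ∀ w w', Relation.EqvGen (joinRel (toPtn f) (idOf ε)) w w' →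
        ε.r (valA f w) (valA f w') := by
      intro w w' h
      induction h with
      | rel x y hxy =>
        rcases hxy with ⟨p, q, hr, hp, hq⟩ | ⟨p, q, hr, hp, hq⟩
        · subst hp; subst hq
          have h1 : ∀ r : V n, valA f (upMid r) = Sum.elim f id r := by
            intro r; cases r <;> rfl
          rw [h1, h1, (hr : Sum.elim f id p = Sum.elim f id q)]
        · subst hp; subst hq
          have h1 : ∀ r : V n, valA f (midLow r) = Sum.elim id id r := by
            intro r; cases r <;> rfl
          rw [h1, h1]; exact hr
      | refl x => exact ε.refl _
      | symm x y _ ih => exact ε.symm ih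
      | trans x y z _ _ ih1 ih2 => exact ε.trans ih1 ih2
    have := key _ _ h
    have h1 : ∀ r : V n, valA f (outer r) = Sum.elim f id r := by
      intro r; cases r <;> rfl
    rwa [h1, h1] at this
  · intro h
    have conn : ∀ r : V n, Relation.EqvGen (joinRel (toPtn f) (idOf ε)) (outer r)
        (Sum.inr (Sum.inl (Sum.elim f id r))) := by
      intro r
      cases r with
      | inl x =>
        exact Relation.EqvGen.rel _ _ (Or.inl ⟨Sum.inl x, Sum.inr (f x), rfl, rfl, rfl⟩)
      | inr y =>
        exact Relation.EqvGen.rel _ _ (Or.inr ⟨Sum.inr y, Sum.inl y, ε.refl y, rfl, rfl⟩)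
    have mid : Relation.EqvGen (joinRel (toPtn f) (idOf ε))
        (Sum.inr (Sum.inl (Sum.elim f id p))) (Sum.inr (Sum.inl (Sum.elim f id q))) :=
      Relation.EqvGen.rel _ _ (Or.inr ⟨Sum.inl _, Sum.inl _, h, rfl, rfl⟩)
    exact Relation.EqvGen.trans _ _ _ (conn p)
      (Relation.EqvGen.trans _ _ _ mid (Relation.EqvGen.symm _ _ (conn q)))

lemma pmul_idOf_idOf (ε η : Setoid (Fin n)) :
    pmul (idOf ε) (idOf η) = idOf (ε ⊔ η) := by
  apply Setoid.ext
  intro p q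
  set pi : V n → Fin n := Sum.elim id id with hpi
  constructor
  · intro h
    have key : ∀ w w', Relation.EqvGen (joinRel (idOf ε) (idOf η)) w w' →
        (ε ⊔ η).r (Sum.elim id pi w) (Sum.elim id pi w') := by
      intro w w' h
      induction h with
      | rel x y hxy =>
        rcases hxy with ⟨p, q, hr, hp, hq⟩ | ⟨p, q, hr, hp, hq⟩
        · subst hp; subst hq
          have h1 : ∀ r : V n, Sum.elim id pi (upMid r) = pi r := by
            intro r; cases r <;> rfl
          rw [h1, h1]
          exact Setoid.le_def.mp le_sup_left hr
        · subst hp; subst hq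
          have h1 : ∀ r : V n, Sum.elim id pi (midLow r) = pi r := by
            intro r; cases r <;> rfl
          rw [h1, h1]
          exact Setoid.le_def.mp le_sup_right hr
      | refl x => exact (ε ⊔ η).iseqv.refl _
      | symm x y _ ih => exact (ε ⊔ η).iseqv.symm ih
      | trans x y z _ _ ih1 ih2 => exact (ε ⊔ η).iseqv.trans ih1 ih2
    have := key _ _ h
    have h1 : ∀ r : V n, Sum.elim id pi (outer r) = pi r := by
      intro r; cases r <;> rfl
    rwa [h1, h1] at this
  · intro h
    have h' : (ε ⊔ η).r (pi p) (pi q) := h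
    rw [Setoid.sup_eq_eqvGen] at h'
    have mid : ∀ x y : Fin n, Relation.EqvGen (fun a b => ε a b ∨ η a b) x y →
        Relation.EqvGen (joinRel (idOf ε) (idOf η))
          (Sum.inr (Sum.inl x)) (Sum.inr (Sum.inl y)) := by
      intro x y h
      induction h with
      | rel a b hab =>
        rcases hab with hab | hab
        · exact Relation.EqvGen.rel _ _ (Or.inl ⟨Sum.inr a, Sum.inr b, hab, rfl, rfl⟩)
        · exact Relation.EqvGen.rel _ _ (Or.inr ⟨Sum.inl a, Sum.inl b, hab, rfl, rfl⟩)
      | refl a => exact Relation.EqvGen.refl _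
      | symm a b _ ih => exact Relation.EqvGen.symm _ _ ih
      | trans a b c _ _ ih1 ih2 => exact Relation.EqvGen.trans _ _ _ ih1 ih2
    have conn : ∀ r : V n, Relation.EqvGen (joinRel (idOf ε) (idOf η)) (outer r)
        (Sum.inr (Sum.inl (pi r))) := by
      intro r
      cases r with
      | inl x => exact Relation.EqvGen.rel _ _ (Or.inl ⟨Sum.inl x, Sum.inr x, ε.refl x, rfl, rfl⟩)
      | inr y => exact Relation.EqvGen.rel _ _ (Or.inr ⟨Sum.inr y, Sum.inl y, η.refl y, rfl, rfl⟩)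
    exact Relation.EqvGen.trans _ _ _ (conn p)
      (Relation.EqvGen.trans _ _ _ (mid _ _ h') (Relation.EqvGen.symm _ _ (conn q)))

/-- The fundamental criterion: `θ_{id_τ}` on transformations is the pointwise `τ`-relation. -/
lemma key_iff (f g : Fin n → Fin n) (τ : Setoid (Fin n)) :
    pmul (toPtn f) (idOf τ) = pmul (toPtn g) (idOf τ) ↔ ∀ x, τ.r (f x) (g x) := by
  rw [pmul_toPtn_idOf, pmul_toPtn_idOf]
  constructor
  · intro h x
    have h1 : Setoid.comap (Sum.elim f id) τ (Sum.inl x) (Sum.inr (f x)) := τ.refl (f x)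
    rw [h] at h1
    exact τ.symm h1
  · intro h
    apply Setoid.ext
    intro p q
    have hp : ∀ r : V n, τ.r (Sum.elim f id r) (Sum.elim g id r) := by
      intro r; cases r with
      | inl x => exact h x
      | inr y => exact τ.refl y
    constructor
    · intro hr
      exact τ.trans (τ.symm (hp p)) (τ.trans hr (hp q))
    · intro hr
      exact τ.trans (hp p) (τ.trans hr (τ.symm (hp q)))

end Aux

section Chains

variable {α : Type*}

/-- Synchronized alternating steps: step `k` is an `ε`-step when `k` is even,
an `η`-step when `k` is odd. -/
def AltC (ε η : Setoid α) (c : ℕ → α) : Prop :=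
  ∀ k, (Even k → ε.r (c k) (c (k + 1))) ∧ (¬ Even k → η.r (c k) (c (k + 1)))

/-- An alternating chain of length `2N` from `y` to `z` (constant after `2N`). -/
def Alt (ε η : Setoid α) (N : ℕ) (y z : α) : Prop :=
  ∃ c : ℕ → α, c 0 = y ∧ (∀ k, 2 * N ≤ k → c k = z) ∧ AltC ε η c

variable {ε η : Setoid α}

lemma Alt.mono {N M : ℕ} (h : N ≤ M) {y z : α} (ha : Alt ε η N y z) : Alt ε η M y z := by
  obtain ⟨c, h0, ht, hc⟩ := ha
  exact ⟨c, h0, fun k hk => ht k (by omega), hc⟩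

lemma alt_refl (y : α) : Alt ε η 0 y y :=
  ⟨fun _ => y, rfl, fun _ _ => rfl, fun _ => ⟨fun _ => ε.refl y, fun _ => η.refl y⟩⟩

lemma alt_of_eps {y z : α} (h : ε.r y z) : Alt ε η 1 y z := by
  refine ⟨fun k => if k = 0 then y else z, rfl, fun k hk => if_neg (by omega), fun k => ?_⟩
  rcases Nat.eq_zero_or_pos k with hk | hk
  · subst hk
    exact ⟨fun _ => h, fun h' => absurd Even.zero h'⟩
  · simp only [if_neg (by omega : ¬ k = 0), if_neg (by omega : ¬ k + 1 = 0)]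
    exact ⟨fun _ => ε.refl z, fun _ => η.refl z⟩

lemma alt_of_eta {y z : α} (h : η.r y z) : Alt ε η 1 y z := by
  refine ⟨fun k => if k ≤ 1 then y else z, rfl, fun k hk => if_neg (by omega), fun k => ?_⟩
  match k with
  | 0 => exact ⟨fun _ => ε.refl y, fun h' => absurd Even.zero h'⟩
  | 1 => exact ⟨fun h' => absurd h' (by simp), fun _ => h⟩
  | (m+2) =>
    simp only [if_neg (by omega : ¬ m + 2 ≤ 1), if_neg (by omega : ¬ m + 2 + 1 ≤ 1)]
    exact ⟨fun _ => ε.refl z, fun _ => η.refl z⟩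

lemma Alt.symm {N : ℕ} {y z : α} (h : Alt ε η N y z) : Alt ε η (N + 1) z y := by
  obtain ⟨c, h0, ht, hc⟩ := h
  refine ⟨fun k => c (2 * N + 1 - k), ht _ (by omega), fun k hk => ?_, fun k => ?_⟩
  · beta_reduce
    have : 2 * N + 1 - k = 0 := by omega
    rw [this, h0]
  · beta_reduce
    rcases le_or_gt k (2 * N) with hk | hk
    · have e1 : 2 * N + 1 - k = (2 * N - k) + 1 := by omega
      have e2 : 2 * N + 1 - (k + 1) = 2 * N - k := by omega
      set j := 2 * N - k with hj
      have hpar : Even j ↔ Even k := by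
        rw [Nat.even_iff, Nat.even_iff]; omega
      constructor
      · intro he
        rw [e1, e2]
        exact ε.symm ((hc j).1 (hpar.mpr he))
      · intro he
        rw [e1, e2]
        exact η.symm ((hc j).2 fun h' => he (hpar.mp h'))
    · have e1 : 2 * N + 1 - k = 0 := by omega
      have e2 : 2 * N + 1 - (k + 1) = 0 := by omega
      rw [e1, e2]
      exact ⟨fun _ => ε.refl _, fun _ => η.refl _⟩

lemma Alt.trans {N M : ℕ} {x y z : α} (h1 : Alt ε η N x y) (h2 : Alt ε η M y z) :
    Alt ε η (N + M) x z := by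
  obtain ⟨c, hc0, hct, hcC⟩ := h1
  obtain ⟨d, hd0, hdt, hdC⟩ := h2
  refine ⟨fun k => if k < 2 * N then c k else d (k - 2 * N), ?_, fun k hk => ?_, fun k => ?_⟩
  all_goals beta_reduce
  · rcases Nat.eq_zero_or_pos N with hN | hN
    · subst hN
      simp only [if_neg (by omega : ¬ (0:ℕ) < 2 * 0)]
      rw [Nat.zero_sub, hd0, ← hc0, hct 0 (by omega)]
    · rw [if_pos (by omega), hc0]
  · rw [if_neg (by omega), hdt _ (by omega)]
  · rcases lt_trichotomy (k + 1) (2 * N) with hk | hk | hk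
    · rw [if_pos (by omega), if_pos hk]
      exact hcC k
    · rw [if_pos (by omega), if_neg (by omega)]
      have : k + 1 - 2 * N = 0 := by omega
      rw [this, hd0, ← hct (k + 1) (by omega)]
      exact hcC k
    · rw [if_neg (by omega), if_neg (by omega)]
      have e1 : k + 1 - 2 * N = (k - 2 * N) + 1 := by omega
      rw [e1]
      set j := k - 2 * N with hj
      have hpar : Even j ↔ Even k := by
        rw [Nat.even_iff, Nat.even_iff]; omega
      exact ⟨fun he => (hdC j).1 (hpar.mpr he), fun he => (hdC j).2 fun h' => he (hpar.mp h')⟩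

lemma alt_exists {y z : α} (h : (ε ⊔ η).r y z) : ∃ N, Alt ε η N y z := by
  have h' : Relation.EqvGen (fun a b => ε a b ∨ η a b) y z := by
    rw [Setoid.sup_eq_eqvGen] at h
    exact h
  clear h
  induction h' with
  | rel a b hab =>
    rcases hab with hab | hab
    · exact ⟨1, alt_of_eps hab⟩
    · exact ⟨1, alt_of_eta hab⟩
  | refl a => exact ⟨0, alt_refl a⟩
  | symm a b _ ih => obtain ⟨N, hN⟩ := ih; exact ⟨N + 1, hN.symm⟩
  | trans a b c _ _ ih1 ih2 =>
    obtain ⟨N, hN⟩ := ih1; obtain ⟨M, hM⟩ := ih2; exact ⟨N + M, hN.trans hM⟩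

end Chains

section Engine

variable {n : ℕ} {ε η : Setoid (Fin n)}

lemma altC_const (a : Fin n) : AltC ε η (fun _ => a) :=
  fun _ => ⟨fun _ => ε.refl a, fun _ => η.refl a⟩

lemma eqvgen_chain (T : Set (Ptn n)) (H : ℕ → Fin n → Fin n)
    (hmem : ∀ k, toPtn (H k) ∈ T)
    (hC : ∀ x, AltC ε η (fun k => H k x)) :
    ∀ m, Relation.EqvGen (thUnion T ε η) (toPtn (H 0)) (toPtn (H m)) := by
  intro m
  induction m with
  | zero => exact Relation.EqvGen.refl _
  | succ m ih =>
    refine Relation.EqvGen.trans _ _ _ ih (Relation.EqvGen.rel _ _ ⟨hmem m, hmem (m+1), ?_⟩)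
    by_cases he : Even m
    · exact Or.inl ((key_iff _ _ _).mpr fun x => (hC x m).1 he)
    · exact Or.inr ((key_iff _ _ _).mpr fun x => (hC x m).2 he)

lemma exists_chains (f g : Fin n → Fin n) (h : ∀ x, (ε ⊔ η).r (f x) (g x)) :
    ∃ N : ℕ, ∃ c : Fin n → ℕ → Fin n,
      (∀ x, c x 0 = f x) ∧ (∀ x k, 2 * N ≤ k → c x k = g x) ∧ ∀ x, AltC ε η (c x) := by
  choose N hN using fun x => alt_exists (h x)
  have h2 : ∀ x, Alt ε η (Finset.univ.sup N) (f x) (g x) :=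
    fun x => (hN x).mono (Finset.le_sup (Finset.mem_univ x))
  choose c h0 ht hC using h2
  exact ⟨Finset.univ.sup N, c, h0, ht, hC⟩

lemma forward_T (f g : Fin n → Fin n) (h : ∀ x, (ε ⊔ η).r (f x) (g x)) :
    Relation.EqvGen (thUnion (TSet n) ε η) (toPtn f) (toPtn g) := by
  obtain ⟨N, c, h0, ht, hC⟩ := exists_chains f g h
  have main := eqvgen_chain (TSet n) (fun k x => c x k)
    (fun k => ⟨fun x => c x k, rfl⟩) (fun x => hC x) (2 * N)
  have e0 : (fun x => c x 0) = f := funext h0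
  have e1 : (fun x => c x (2 * N)) = g := funext fun x => ht x _ le_rfl
  rwa [e0, e1] at main

lemma mem_SingT1_of_collision {h : Fin n → Fin n} {i j : Fin n} (hij : i ≠ j)
    (hcol : h i = h j) : toPtn h ∈ SingT1 n :=
  Or.inl ⟨h, rfl, fun hb => hij (hb.injective hcol)⟩

lemma mem_SingT1_id : toPtn (id : Fin n → Fin n) ∈ SingT1 n := Or.inr rfl

lemma track_eqv (i j : Fin n) (hij : i ≠ j) (f g : Fin n → Fin n) (hfij : f j = f i)
    (h : ∀ x, (ε ⊔ η).r (f x) (g x)) :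
    Relation.EqvGen (thUnion (SingT1 n) ε η) (toPtn f)
      (toPtn (Function.update g j (g i))) := by
  obtain ⟨N, c, h0, ht, hC⟩ := exists_chains f g h
  set H : ℕ → Fin n → Fin n := fun k x => if x = j then c i k else c x k with hH
  have hmem : ∀ k, toPtn (H k) ∈ SingT1 n := by
    intro k
    refine mem_SingT1_of_collision hij ?_
    show (if i = j then c i k else c i k) = (if j = j then c i k else c j k)
    rw [if_neg hij, if_pos rfl]
  have hCx : ∀ x, AltC ε η (fun k => H k x) := by
    intro x
    by_cases hx : x = j
    · have : (fun k => H k x) = c i := funext fun k => if_pos hx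
      rw [this]; exact hC i
    · have : (fun k => H k x) = c x := funext fun k => if_neg hx
      rw [this]; exact hC x
  have main := eqvgen_chain (SingT1 n) H hmem hCx (2 * N)
  have e0 : H 0 = f := by
    funext x
    by_cases hx : x = j
    · show (if x = j then c i 0 else c x 0) = f x
      rw [if_pos hx, h0, hx, hfij]
    · show (if x = j then c i 0 else c x 0) = f x
      rw [if_neg hx, h0]
  have e1 : H (2 * N) = Function.update g j (g i) := by
    funext x
    by_cases hx : x = j
    · show (if x = j then c i (2 * N) else c x (2 * N)) = _
      rw [if_pos hx, ht i _ le_rfl, hx, Function.update_self]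
    · show (if x = j then c i (2 * N) else c x (2 * N)) = _
      rw [if_neg hx, ht x _ le_rfl, Function.update_of_ne hx]
  rwa [e0, e1] at main

lemma vary_eqv (j : Fin n) (g : Fin n → Fin n) (v w : Fin n) (hvw : (ε ⊔ η).r v w)
    (hsing : ∀ u : Fin n, toPtn (Function.update g j u) ∈ SingT1 n) :
    Relation.EqvGen (thUnion (SingT1 n) ε η) (toPtn (Function.update g j v))
      (toPtn (Function.update g j w)) := by
  obtain ⟨N, d, h0, ht, hC⟩ := alt_exists hvw
  set H : ℕ → Fin n → Fin n := fun k => Function.update g j (d k) with hH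
  have hCx : ∀ x, AltC ε η (fun k => H k x) := by
    intro x
    by_cases hx : x = j
    · have : (fun k => H k x) = d := funext fun k => by
        show Function.update g j (d k) x = d k
        rw [hx, Function.update_self]
      rw [this]; exact hC
    · have : (fun k => H k x) = fun _ => g x := funext fun k => by
        show Function.update g j (d k) x = g x
        rw [Function.update_of_ne hx]
      rw [this]; exact altC_const (g x)
  have main := eqvgen_chain (SingT1 n) H (fun k => hsing (d k)) hCx (2 * N)
  have e0 : H 0 = Function.update g j v := by show Function.update g j (d 0) = _; rw [h0]
  have e1 : H (2 * N) = Function.update g j w := by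
    show Function.update g j (d (2 * N)) = _; rw [ht _ le_rfl]
  rwa [e0, e1] at main

end Engine

section Main

variable {n : ℕ} {ε η : Setoid (Fin n)}

lemma backward (T : Set (Ptn n)) (hT : ∀ c ∈ T, ∃ f : Fin n → Fin n, c = toPtn f)
    {a b : Ptn n} (h : Relation.EqvGen (thUnion T ε η) a b) :
    a = b ∨ ∃ f g : Fin n → Fin n, a = toPtn f ∧ b = toPtn g ∧
      ∀ x, (ε ⊔ η).r (f x) (g x) := by
  induction h with
  | rel c d hcd =>
    obtain ⟨hc, hd, hor⟩ := hcd
    obtain ⟨f, rfl⟩ := hT c hc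
    obtain ⟨g, rfl⟩ := hT d hd
    refine Or.inr ⟨f, g, rfl, rfl, ?_⟩
    rcases hor with hor | hor
    · exact fun x => Setoid.le_def.mp le_sup_left ((key_iff f g ε).mp hor x)
    · exact fun x => Setoid.le_def.mp le_sup_right ((key_iff f g η).mp hor x)
  | refl a => exact Or.inl rfl
  | symm a b _ ih =>
    rcases ih with rfl | ⟨f, g, rfl, rfl, hfg⟩
    · exact Or.inl rfl
    · exact Or.inr ⟨g, f, rfl, rfl, fun x => (ε ⊔ η).iseqv.symm (hfg x)⟩
  | trans a c b _ _ ih1 ih2 =>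
    rcases ih1 with rfl | ⟨f, g, rfl, hc, hfg⟩
    · exact ih2
    · rcases ih2 with rfl | ⟨f', g', hc', rfl, hfg'⟩
      · exact Or.inr ⟨f, g, rfl, hc, hfg⟩
      · have : g = f' := toPtn_injective (hc.symm.trans hc')
        subst this
        exact Or.inr ⟨f, g', rfl, rfl, fun x => (ε ⊔ η).iseqv.trans (hfg x) (hfg' x)⟩

lemma choose_pairs {f g : Fin n → Fin n} {i j p q : Fin n} (hij : i ≠ j)
    (hfij : f i = f j) (hpq : p ≠ q) (hgpq : g p = g q)
    (hno : ¬ ∃ i' j' : Fin n, i' ≠ j' ∧ f i' = f j' ∧ g i' = g j') :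
    ∃ i' j' p' q' : Fin n, i' ≠ j' ∧ f i' = f j' ∧ p' ≠ q' ∧ g p' = g q' ∧
      j' ≠ p' ∧ j' ≠ q' := by
  by_cases hjp : j = p
  · by_cases hiq : i = q
    · exact absurd ⟨i, j, hij, hfij, by rw [hiq, hjp, hgpq]⟩ hno
    · by_cases hip : i = p
      · exact absurd (hip.trans hjp.symm) hij
      · exact ⟨j, i, p, q, hij.symm, hfij.symm, hpq, hgpq, hip, hiq⟩
  · by_cases hjq : j = q
    · by_cases hip : i = p
      · exact absurd ⟨i, j, hij, hfij, by rw [hip, hjq, hgpq]⟩ hno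
      · by_cases hiq : i = q
        · exact absurd (hiq.trans hjq.symm) hij
        · exact ⟨j, i, p, q, hij.symm, hfij.symm, hpq, hgpq, hip, hiq⟩
    · exact ⟨i, j, p, q, hij, hfij, hpq, hgpq, hjp, hjq⟩

lemma collision_of_sing {f : Fin n → Fin n} (hf : ¬ Function.Bijective f) :
    ∃ i j : Fin n, i ≠ j ∧ f i = f j := by
  have : ¬ Function.Injective f := fun hi => hf (Finite.injective_iff_bijective.mp hi)
  obtain ⟨i, j, hfij, hij⟩ := Function.not_injective_iff.mp this
  exact ⟨i, j, hij, hfij⟩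

/-- Forward direction for `Sing(T_n)¹`, in the case `f = id`, `g` singular. -/
lemma forward_Sing_id (g : Fin n → Fin n) (hg : ¬ Function.Bijective g)
    (h : ∀ x, (ε ⊔ η).r x (g x)) :
    Relation.EqvGen (thUnion (SingT1 n) ε η) (toPtn (id : Fin n → Fin n)) (toPtn g) := by
  obtain ⟨p, q, hpq, hgpq⟩ := collision_of_sing hg
  -- Step 1: from id to e := update id q p
  have hsing : ∀ u : Fin n, toPtn (Function.update (id : Fin n → Fin n) q u) ∈ SingT1 n := by
    intro u
    by_cases hu : u = q
    · rw [hu, show Function.update (id : Fin n → Fin n) q q = id from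
        Function.update_eq_self q id]
      exact mem_SingT1_id
    · refine mem_SingT1_of_collision hu ?_
      rw [Function.update_of_ne hu, Function.update_self]
      rfl
  have hq : (ε ⊔ η).r q p :=
    (ε ⊔ η).iseqv.trans (hgpq ▸ h q) ((ε ⊔ η).iseqv.symm (h p))
  have step1 := vary_eqv q (id : Fin n → Fin n) q p hq hsing
  have hid : Function.update (id : Fin n → Fin n) q q = id := Function.update_eq_self q id
  rw [hid] at step1
  -- Step 2: from e to g by tracking q ↦ p
  set e : Fin n → Fin n := Function.update (id : Fin n → Fin n) q p with he
  have heq : e q = e p := by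
    rw [he, Function.update_self, Function.update_of_ne hpq]; rfl
  have h' : ∀ x, (ε ⊔ η).r (e x) (g x) := by
    intro x
    by_cases hx : x = q
    · rw [hx, he, Function.update_self]
      exact hgpq ▸ h p
    · rw [he, Function.update_of_ne hx]
      exact h x
  have step2 := track_eqv p q hpq e g heq h'
  rw [show Function.update g q (g p) = g by rw [hgpq]; exact Function.update_eq_self q g]
    at step2
  exact Relation.EqvGen.trans _ _ _ step1 step2

/-- Forward direction for `Sing(T_n)¹`, in the case `f, g` both singular. -/
lemma forward_Sing_sing (f g : Fin n → Fin n) (hf : ¬ Function.Bijective f)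
    (hg : ¬ Function.Bijective g) (h : ∀ x, (ε ⊔ η).r (f x) (g x)) :
    Relation.EqvGen (thUnion (SingT1 n) ε η) (toPtn f) (toPtn g) := by
  by_cases hcom : ∃ i' j' : Fin n, i' ≠ j' ∧ f i' = f j' ∧ g i' = g j'
  · obtain ⟨i, j, hij, hfij, hgij⟩ := hcom
    have main := track_eqv j i hij.symm f g hfij h
    rwa [show Function.update g i (g j) = g by
      rw [← hgij]; exact Function.update_eq_self i g] at main
  · obtain ⟨i0, j0, hij0, hfij0⟩ := collision_of_sing hf
    obtain ⟨p0, q0, hpq0, hgpq0⟩ := collision_of_sing hg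
    obtain ⟨i, j, p, q, hij, hfij, hpq, hgpq, hjp, hjq⟩ :=
      choose_pairs hij0 hfij0 hpq0 hgpq0 hcom
    -- Stage A: track j ↦ i
    have stageA := track_eqv i j hij f g hfij.symm h
    -- Stage B: vary coordinate j from g i to g j
    have hsing : ∀ u : Fin n, toPtn (Function.update g j u) ∈ SingT1 n := by
      intro u
      refine mem_SingT1_of_collision hpq ?_
      rw [Function.update_of_ne (fun hh => hjp hh.symm),
        Function.update_of_ne (fun hh => hjq hh.symm)]
      exact hgpq
    have hgigj : (ε ⊔ η).r (g i) (g j) :=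
      (ε ⊔ η).iseqv.trans ((ε ⊔ η).iseqv.symm (h i)) (hfij ▸ h j)
    have stageB := vary_eqv j g (g i) (g j) hgigj hsing
    rw [Function.update_eq_self j g] at stageB
    exact Relation.EqvGen.trans _ _ _ stageA stageB

lemma forward_Sing (f g : Fin n → Fin n)
    (hf : ¬ Function.Bijective f ∨ f = id) (hg : ¬ Function.Bijective g ∨ g = id)
    (h : ∀ x, (ε ⊔ η).r (f x) (g x)) :
    Relation.EqvGen (thUnion (SingT1 n) ε η) (toPtn f) (toPtn g) := by
  rcases hf with hf | rfl
  · rcases hg with hg | rfl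
    · exact forward_Sing_sing f g hf hg h
    · exact Relation.EqvGen.symm _ _
        (forward_Sing_id f hf (fun x => (ε ⊔ η).iseqv.symm (h x)))
  · rcases hg with hg | rfl
    · exact forward_Sing_id g hg h
    · exact Relation.EqvGen.refl _

lemma singT1_form {a : Ptn n} (ha : a ∈ SingT1 n) :
    ∃ f : Fin n → Fin n, (¬ Function.Bijective f ∨ f = id) ∧ a = toPtn f := by
  rcases ha with ⟨f, rfl, hb⟩ | ha
  · exact ⟨f, Or.inl hb, rfl⟩
  · exact ⟨id, Or.inr rfl, ha⟩

end Main

/-- Lemma `lem:thuv`.  For `S = T_n` or `S = Sing(T_n)`, and all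
`u = id_ε, v = id_η ∈ E_n`, we have `θ_{uv} = θ_u ∨ θ_v`, the join as equivalence
relations (equivalently, as left congruences) on `S¹`. -/
theorem stmt13 (n : ℕ) (hn : 2 ≤ n) (ε η : Setoid (Fin n)) :
    (∀ a ∈ TSet n, ∀ b ∈ TSet n,
      (pmul a (pmul (idOf ε) (idOf η)) = pmul b (pmul (idOf ε) (idOf η)) ↔
        Relation.EqvGen (thUnion (TSet n) ε η) a b)) ∧
    (∀ a ∈ SingT1 n, ∀ b ∈ SingT1 n,
      (pmul a (pmul (idOf ε) (idOf η)) = pmul b (pmul (idOf ε) (idOf η)) ↔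
        Relation.EqvGen (thUnion (SingT1 n) ε η) a b)) := by
  constructor
  · rintro a ⟨f, rfl⟩ b ⟨g, rfl⟩
    rw [pmul_idOf_idOf, key_iff]
    constructor
    · exact forward_T f g
    · intro hE
      rcases backward (TSet n) (fun c hc => hc) hE with heq | ⟨f', g', hf', hg', hp⟩
      · have : f = g := toPtn_injective heq
        subst this
        exact fun x => (ε ⊔ η).iseqv.refl _
      · have e1 : f = f' := toPtn_injective hf'
        have e2 : g = g' := toPtn_injective hg'
        subst e1; subst e2
        exact hp
  · intro a ha b hb
    obtain ⟨f, hf, rfl⟩ := singT1_form ha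
    obtain ⟨g, hg, rfl⟩ := singT1_form hb
    rw [pmul_idOf_idOf, key_iff]
    constructor
    · exact forward_Sing f g hf hg
    · intro hE
      have hT : ∀ c ∈ SingT1 n, ∃ f : Fin n → Fin n, c = toPtn f := by
        intro c hc
        obtain ⟨f, _, h⟩ := singT1_form hc
        exact ⟨f, h⟩
      rcases backward (SingT1 n) hT hE with heq | ⟨f', g', hf', hg', hp⟩
      · have : f = g := toPtn_injective heq
        subst this
        exact fun x => (ε ⊔ η).iseqv.refl _
      · have e1 : f = f' := toPtn_injective hf'
        have e2 : g = g' := toPtn_injective hg'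
        subst e1; subst e2
        exact hp


end PaperFDP
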